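/- arXiv:1910.11660 — 2 statements merged into one kernel-verified Lean document; each statement's English description precedes it below -/
import Mathlib

section
/- Let {X_n} satisfy AIM(x_n) with separation sequence q_n and mixing coefficients α_n. Let k ≥ 2 and let I_1, I_2, …, I_k be distinct subintervals of {1, 2, …, n} with |I_i| ≥ q_n for 1 ≤ i ≤ k, such that I_i and I_{i+1} are separated by q_n for 1 ≤ i ≤ k−1. Then |P(M(∪_{i=1}^k I_i) ≤ x_n) − ∏_{i=1}^k P(M(I_i) ≤ x_n)| ≤ (k−1)·α_n + 2(k−2)·q_n·F̄(x_n). -/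
open MeasureTheory Filter Finset Asymptotics

/-- Probability of an event as a real number. -/
noncomputable def pr {Ω : Type*} [MeasurableSpace Ω] (P : Measure Ω) (A : Set Ω) : ℝ :=
  (P A).toReal

/-- The event that `X i ≤ x` for every index `i` in the set `S`;
this is the event `{M(S) ≤ x}` where `M(S) = max {X i : i ∈ S}`. -/
def allLe {Ω : Type*} (X : ℕ → Ω → ℝ) (S : Set ℕ) (x : ℝ) : Set Ω :=
  {ω | ∀ i ∈ S, X i ω ≤ x}

/-- `α` is a sequence of AIM mixing coefficients for `X` relative to thresholds `xs`
with separation sequence `q`: for any two intervals `I₁ = [a,b]`, `I₂ = [b+qₙ+1, c]`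
contained in `{1,…,n}`, separated by `qₙ`, each of cardinality at least `qₙ`,
the maximum-based discrepancy is bounded by `α n`. -/
def AIMBound {Ω : Type*} [MeasurableSpace Ω] (P : Measure Ω) (X : ℕ → Ω → ℝ)
    (xs : ℕ → ℝ) (q : ℕ → ℕ) (α : ℕ → ℝ) : Prop :=
  ∀ n a b c : ℕ, 1 ≤ a → a ≤ b → b + q n + 1 ≤ c → c ≤ n →
    q n ≤ b + 1 - a → q n ≤ c - (b + q n) →
    |pr P (allLe X (Set.Icc a b ∪ Set.Icc (b + q n + 1) c) (xs n)) -
      pr P (allLe X (Set.Icc a b) (xs n)) *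
        pr P (allLe X (Set.Icc (b + q n + 1) c) (xs n))| ≤ α n

/-!
Write `Jⱼ = [a₀, bⱼ]` for the block running from the start of `I₀` to the end of `Iⱼ`.
Induction on `j` gives `|P(M(Jⱼ) ≤ xₙ) − ∏_{i ≤ j} P(M(Iᵢ) ≤ xₙ)| ≤ j(αₙ + qₙF̄(xₙ))`: the
sets `Jⱼ₊₁` and `Jⱼ ∪ Iⱼ₊₁` differ by the `qₙ` indices of one gap, which costs at most
`qₙF̄(xₙ)` by the union bound, and `Jⱼ, Iⱼ₊₁` is a pair to which AIM applies, which costs `αₙ`.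
For the union of all `k` intervals one compares it with `Jₖ₋₂ ∪ Iₖ₋₁`, from which it differs by
the `k − 2` gaps between `I₀, …, Iₖ₋₂`, and applies AIM once more.
-/

lemma abs_sub_mul_le_add_add {t s u v p g A e : ℝ} (hp₀ : 0 ≤ p) (hp₁ : p ≤ 1)
    (hts : |t - s| ≤ g) (hsu : |s - u * p| ≤ A) (huv : |u - v| ≤ e) :
    |t - v * p| ≤ g + A + e := by
  have hup : |u * p - v * p| ≤ e := by
    rw [← sub_mul, abs_mul, abs_of_nonneg hp₀]
    nlinarith [abs_nonneg (u - v)]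
  linarith [abs_sub_le t s (v * p), abs_sub_le s (u * p) (v * p)]

section Fill

variable {Ω : Type*} {X : ℕ → Ω → ℝ} {x : ℝ} {S T : Set ℕ} {G : Finset ℕ}

lemma allLe_subset_allLe (h : S ⊆ T) : allLe X T x ⊆ allLe X S x :=
  fun _ hω i hi => hω i (h hi)

lemma allLe_subset_union_biUnion (h : T ⊆ S ∪ G) :
    allLe X S x ⊆ allLe X T x ∪ ⋃ i ∈ G, {ω | X i ω ≤ x}ᶜ := by
  intro ω hω
  by_cases hG : ∀ i ∈ G, X i ω ≤ x
  · left
    intro i hi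
    rcases h hi with hiS | hiG
    exacts [hω i hiS, hG i hiG]
  · simp only [not_forall] at hG
    obtain ⟨i, hi, hxi⟩ := hG
    exact Or.inr (Set.mem_biUnion hi hxi)

variable [MeasurableSpace Ω] (P : Measure Ω)

lemma pr_eq_measureReal (A : Set Ω) : pr P A = P.real A := rfl

variable [IsProbabilityMeasure P] {F : ℝ → ℝ}

lemma pr_allLe_le_add_card (hmeas : ∀ i, Measurable (X i))
    (hF : ∀ i ∈ G, pr P {ω | X i ω ≤ x} = F x) (h : T ⊆ S ∪ G) :
    pr P (allLe X S x) ≤ pr P (allLe X T x) + #G * (1 - F x) := by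
  simp only [pr_eq_measureReal] at hF ⊢
  calc P.real (allLe X S x)
      ≤ P.real (allLe X T x ∪ ⋃ i ∈ G, {ω | X i ω ≤ x}ᶜ) :=
        measureReal_mono (allLe_subset_union_biUnion h)
    _ ≤ P.real (allLe X T x) + ∑ i ∈ G, P.real {ω | X i ω ≤ x}ᶜ :=
        (measureReal_union_le _ _).trans (add_le_add_right (measureReal_biUnion_finset_le _ _) _)
    _ = P.real (allLe X T x) + #G * (1 - F x) := by
        rw [sum_congr rfl fun i hi => by
          rw [probReal_compl_eq_one_sub (measurableSet_le (hmeas i) measurable_const), hF i hi]]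
        rw [sum_const, nsmul_eq_mul]

lemma abs_pr_allLe_sub_le {m : ℕ} (hmeas : ∀ i, Measurable (X i))
    (hF : ∀ i, 1 ≤ i → pr P {ω | X i ω ≤ x} = F x) (hST : S ⊆ T) (hTS : T ⊆ S ∪ G)
    (hG : ∀ i ∈ G, 1 ≤ i) (hm : #G ≤ m) :
    |pr P (allLe X S x) - pr P (allLe X T x)| ≤ m * (1 - F x) := by
  have hF₁ : F x ≤ 1 := hF 1 le_rfl ▸ measureReal_le_one
  have hTS' : pr P (allLe X T x) ≤ pr P (allLe X S x) :=
    measureReal_mono (allLe_subset_allLe hST)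
  have hST' := pr_allLe_le_add_card P hmeas (fun i hi => hF i (hG i hi)) hTS
  have hGm : (#G : ℝ) * (1 - F x) ≤ m * (1 - F x) := by gcongr
  rw [abs_of_nonneg (by linarith)]
  linarith

end Fill

section Chain

variable {a b : ℕ → ℕ} {Q k j : ℕ}

structure SeparatedIntervals (n Q k : ℕ) (a b : ℕ → ℕ) : Prop where
  le : ∀ i < k, a i ≤ b i
  one_le : 1 ≤ a 0
  le_n : b (k - 1) ≤ n
  card : ∀ i < k, Q ≤ b i + 1 - a i
  sep : ∀ i, i + 1 < k → a (i + 1) = b i + Q + 1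

def gaps (b : ℕ → ℕ) (Q j : ℕ) : Finset ℕ :=
  (range j).biUnion fun i => Finset.Icc (b i + 1) (b i + Q)

lemma mem_gaps {m : ℕ} : m ∈ gaps b Q j ↔ ∃ i < j, b i + 1 ≤ m ∧ m ≤ b i + Q := by
  simp [gaps]

lemma one_le_of_mem_gaps {i : ℕ} (hi : i ∈ gaps b Q j) : 1 ≤ i := by
  obtain ⟨_, _, hi, _⟩ := mem_gaps.mp hi
  omega

lemma card_gaps_le : #(gaps b Q j) ≤ j * Q :=
  (card_biUnion_le_card_mul _ _ Q fun _ _ => by simp).trans_eq (by rw [card_range])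

lemma right_endpoint_le_of_le (hab : ∀ i < k, a i ≤ b i)
    (hsep : ∀ i, i + 1 < k → a (i + 1) = b i + Q + 1) {i : ℕ} (hij : i ≤ j) (hj : j < k) :
    b i ≤ b j := by
  induction j with
  | zero => rw [Nat.le_zero.mp hij]
  | succ j ih =>
    rcases hij.eq_or_lt with rfl | hij
    · rfl
    · have := ih (by omega) (by omega)
      have := hsep j hj
      have := hab (j + 1) hj
      omega

lemma biUnion_Icc_subset_Icc (hab : ∀ i < k, a i ≤ b i)
    (hsep : ∀ i, i + 1 < k → a (i + 1) = b i + Q + 1) (hj : j < k) :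
    ⋃ i ∈ range (j + 1), Set.Icc (a i) (b i) ⊆ Set.Icc (a 0) (b j) := by
  simp only [Set.iUnion_subset_iff, mem_range]
  intro i hi
  have hbi := right_endpoint_le_of_le hab hsep (Nat.le_of_lt_succ hi) hj
  have ha₀ : a 0 ≤ a i := by
    cases i with
    | zero => rfl
    | succ i =>
      have := hab 0 (by omega)
      have := right_endpoint_le_of_le hab hsep (Nat.zero_le i) (by omega)
      have := hsep i (by omega)
      omega
  exact Set.Icc_subset_Icc ha₀ hbi

lemma Icc_subset_biUnion_union_gaps (hsep : ∀ i, i + 1 < k → a (i + 1) = b i + Q + 1)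
    (hj : j < k) :
    Set.Icc (a 0) (b j) ⊆ (⋃ i ∈ range (j + 1), Set.Icc (a i) (b i)) ∪ gaps b Q j := by
  induction j with
  | zero => simp
  | succ j ih =>
    intro m ⟨h₀, hm⟩
    simp only [Set.mem_union, Set.mem_iUnion, mem_range, Set.mem_Icc, mem_coe, mem_gaps,
      exists_prop]
    by_cases hmj : m ≤ b j
    · have hm' := ih (by omega) ⟨h₀, hmj⟩
      simp only [Set.mem_union, Set.mem_iUnion, mem_range, Set.mem_Icc, mem_coe, mem_gaps,
        exists_prop] at hm'
      rcases hm' with ⟨i, hi, hm'⟩ | ⟨i, hi, hm'⟩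
      · exact Or.inl ⟨i, by omega, hm'⟩
      · exact Or.inr ⟨i, by omega, hm'⟩
    · have := hsep j hj
      by_cases hma : a (j + 1) ≤ m
      · exact Or.inl ⟨j + 1, by omega, hma, hm⟩
      · exact Or.inr ⟨j, by omega, by omega, by omega⟩

variable {Ω : Type*} [MeasurableSpace Ω] (P : Measure Ω) {X : ℕ → Ω → ℝ} {xs : ℕ → ℝ}
  {q : ℕ → ℕ} {α : ℕ → ℝ} {n : ℕ}

lemma abs_pr_union_sub_mul_le (hbd : AIMBound P X xs q α)
    (hI : SeparatedIntervals n (q n) k a b) (hj : j + 1 < k) :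
    |pr P (allLe X (Set.Icc (a 0) (b j) ∪ Set.Icc (a (j + 1)) (b (j + 1))) (xs n)) -
      pr P (allLe X (Set.Icc (a 0) (b j)) (xs n)) *
        pr P (allLe X (Set.Icc (a (j + 1)) (b (j + 1))) (xs n))| ≤ α n := by
  have hb₀ := right_endpoint_le_of_le hI.le hI.sep (Nat.zero_le j) (by omega)
  have hbn := (right_endpoint_le_of_le hI.le hI.sep (i := j + 1) (j := k - 1) (by omega)
    (by omega)).trans hI.le_n
  have := hI.le 0 (by omega)
  have := hI.card 0 (by omega)
  have := hI.le (j + 1) hj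
  have := hI.card (j + 1) hj
  rw [hI.sep j hj] at *
  exact hbd n (a 0) (b j) (b (j + 1)) hI.one_le (by omega) (by omega) hbn (by omega) (by omega)

variable [IsProbabilityMeasure P] {F : ℝ → ℝ}

lemma abs_pr_Icc_sub_prod_le (hmeas : ∀ i, Measurable (X i))
    (hF : ∀ i, 1 ≤ i → pr P {ω | X i ω ≤ xs n} = F (xs n)) (hbd : AIMBound P X xs q α)
    (hI : SeparatedIntervals n (q n) k a b) (hj : j < k) :
    |pr P (allLe X (Set.Icc (a 0) (b j)) (xs n)) -
      ∏ i ∈ range (j + 1), pr P (allLe X (Set.Icc (a i) (b i)) (xs n))| ≤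
      j * (α n + q n * (1 - F (xs n))) := by
  induction j with
  | zero => simp
  | succ j ih =>
    have hb₀ := right_endpoint_le_of_le hI.le hI.sep (Nat.zero_le j) (by omega)
    have := hI.le 0 (by omega)
    have := hI.le (j + 1) hj
    have := hI.sep j hj
    have hgap := abs_pr_allLe_sub_le P (G := Finset.Icc (b j + 1) (b j + q n)) (m := q n) hmeas
      hF (S := Set.Icc (a 0) (b j) ∪ Set.Icc (a (j + 1)) (b (j + 1)))
      (T := Set.Icc (a 0) (b (j + 1)))
      (fun m hm => by simp only [Set.mem_union, Set.mem_Icc] at hm ⊢; omega)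
      (fun m hm => by simp only [Set.mem_union, Set.mem_Icc, coe_Icc] at hm ⊢; omega)
      (fun i hi => by simp only [Finset.mem_Icc] at hi; omega) (by simp)
    rw [prod_range_succ]
    calc _ ≤ q n * (1 - F (xs n)) + α n + j * (α n + q n * (1 - F (xs n))) :=
          abs_sub_mul_le_add_add measureReal_nonneg measureReal_le_one
            (by rwa [abs_sub_comm]) (abs_pr_union_sub_mul_le P hbd hI hj) (ih (by omega))
      _ = _ := by push_cast; ring

end Chain

theorem stmt0_general {Ω : Type*} [MeasurableSpace Ω] (P : Measure Ω) [IsProbabilityMeasure P]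
    (X : ℕ → Ω → ℝ) (F : ℝ → ℝ) (xs : ℕ → ℝ) (q : ℕ → ℕ) (α : ℕ → ℝ)
    (hmeas : ∀ i, Measurable (X i))
    (hF : ∀ i, 1 ≤ i → ∀ t : ℝ, pr P {ω | X i ω ≤ t} = F t)
    (hbd : AIMBound P X xs q α)
    (n k : ℕ) (hk : 2 ≤ k) (a b : ℕ → ℕ)
    (hab : ∀ i < k, a i ≤ b i)
    (ha1 : 1 ≤ a 0) (hbn : b (k - 1) ≤ n)
    (hcard : ∀ i < k, q n ≤ b i + 1 - a i)
    (hsep : ∀ i, i + 1 < k → a (i + 1) = b i + q n + 1) :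
    |pr P (allLe X (⋃ i ∈ Finset.range k, Set.Icc (a i) (b i)) (xs n)) -
      ∏ i ∈ Finset.range k, pr P (allLe X (Set.Icc (a i) (b i)) (xs n))| ≤
      ((k : ℝ) - 1) * α n + 2 * ((k : ℝ) - 2) * (q n : ℝ) * (1 - F (xs n)) := by
  obtain ⟨K, rfl⟩ : ∃ K, k = K + 2 := ⟨k - 2, by omega⟩
  have hI : SeparatedIntervals n (q n) (K + 2) a b := ⟨hab, ha1, hbn, hcard, hsep⟩
  have hF' : ∀ i, 1 ≤ i → pr P {ω | X i ω ≤ xs n} = F (xs n) := fun i hi => hF i hi (xs n)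
  have hU : ⋃ i ∈ range (K + 2), Set.Icc (a i) (b i) =
      (⋃ i ∈ range (K + 1), Set.Icc (a i) (b i)) ∪ Set.Icc (a (K + 1)) (b (K + 1)) := by
    rw [range_add_one, set_biUnion_insert, Set.union_comm]
  have hgaps := abs_pr_allLe_sub_le P hmeas hF' (x := xs n) (G := gaps b (q n) K)
    (S := ⋃ i ∈ range (K + 2), Set.Icc (a i) (b i))
    (T := Set.Icc (a 0) (b K) ∪ Set.Icc (a (K + 1)) (b (K + 1)))
    (by
      rw [hU]
      exact Set.union_subset_union_left _ (biUnion_Icc_subset_Icc hab hsep (by omega)))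
    (by
      rw [hU, Set.union_right_comm]
      exact Set.union_subset_union_left _ (Icc_subset_biUnion_union_gaps hsep (by omega)))
    (fun _ => one_le_of_mem_gaps) card_gaps_le
  rw [prod_range_succ]
  calc _ ≤ (K * q n : ℕ) * (1 - F (xs n)) + α n + K * (α n + q n * (1 - F (xs n))) :=
        abs_sub_mul_le_add_add measureReal_nonneg measureReal_le_one hgaps
          (abs_pr_union_sub_mul_le P hbd hI (by omega))
          (abs_pr_Icc_sub_prod_le P hmeas hF' hbd hI (by omega))
    _ = _ := by push_cast; ring

/-- Lemma 1 of the paper: if `{Xₙ}` satisfies AIM(xₙ) with separation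
sequence `qₙ` and mixing coefficients `αₙ`, and `I₁,…,I_k` (`k ≥ 2`) are distinct
subintervals of `{1,…,n}`, each of cardinality at least `qₙ`, with consecutive
intervals separated by `qₙ`, then
`|P(M(⋃ Iᵢ) ≤ xₙ) − ∏ P(M(Iᵢ) ≤ xₙ)| ≤ (k−1)αₙ + 2(k−2)qₙ·F̄(xₙ)`. -/
theorem stmt0 {Ω : Type*} [MeasurableSpace Ω] (P : Measure Ω) [IsProbabilityMeasure P]
    (X : ℕ → Ω → ℝ) (F : ℝ → ℝ) (xs : ℕ → ℝ) (q : ℕ → ℕ) (α : ℕ → ℝ)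
    (hmeas : ∀ i, Measurable (X i))
    (hF : ∀ i, 1 ≤ i → ∀ t : ℝ, pr P {ω | X i ω ≤ t} = F t)
    (hqpos : ∀ m, 1 ≤ q m)
    (hq : (fun n => (q n : ℝ)) =o[atTop] (fun n => (n : ℝ)))
    (hα : Tendsto α atTop (nhds 0))
    (hbd : AIMBound P X xs q α)
    (n k : ℕ) (hk : 2 ≤ k) (a b : ℕ → ℕ)
    (hab : ∀ i < k, a i ≤ b i)
    (ha1 : 1 ≤ a 0) (hbn : b (k - 1) ≤ n)
    (hcard : ∀ i < k, q n ≤ b i + 1 - a i)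
    (hsep : ∀ i, i + 1 < k → a (i + 1) = b i + q n + 1) :
    |pr P (allLe X (⋃ i ∈ Finset.range k, Set.Icc (a i) (b i)) (xs n)) -
      ∏ i ∈ Finset.range k, pr P (allLe X (Set.Icc (a i) (b i)) (xs n))| ≤
      ((k : ℝ) - 1) * α n + 2 * ((k : ℝ) - 2) * (q n : ℝ) * (1 - F (xs n)) :=
  stmt0_general P X F xs q α hmeas hF hbd n k hk a b hab ha1 hbn hcard hsep
end

section
/- Let {X_n} satisfy AIM(x_n) with separation sequence q_n and mixing coefficients α_n, suppose n·F̄(x_n) → τ > 0 as n → ∞ with F̄(x_n) > 0 for every n, and let (p_n) be a sequence of positive integers with p_n = o(n), n·α_n = o(p_n) and q_n = o(p_n). Then P(M_n ≤ x_n) − F(x_n)^{n·γ_n} → 0 as n → ∞, where γ_n = (1/n) ∑_{j=1}^{n} P(M_{j,j+p_n} ≤ x_n | X_j > x_n). -/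
/-!
Write `F̄ₙ = 1 - F(xₙ)` and `Sₙ = ∑_{j ≤ n} P(X_j > xₙ, M_{j,j+pₙ} ≤ xₙ)`, so that
`n γₙ = Sₙ / F̄ₙ`. Since `F̄ₙ → 0` while `Sₙ ≤ n F̄ₙ` stays bounded,
`F(xₙ)^{nγₙ} = exp((Sₙ / F̄ₙ) log (1 - F̄ₙ))` is `exp(-Sₙ) + o(1)`, and it remains to show
`P(Mₙ ≤ xₙ) - exp(-Sₙ) → 0`.

Cut `{1, …, n}` into blocks of length `L` and drop the first `qₙ` indices of each block. By AIM,
`P(Mₙ ≤ xₙ)` is the product of the block probabilities `gᵢ` up to `(n / L)(αₙ + qₙ F̄ₙ)`, and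
`∏ gᵢ ≈ exp(-∑ (1 - gᵢ))`. Splitting `{M(block) > xₙ}` according to its last exceedance compares
`∑ (1 - gᵢ)` with `Sₙ`: for `L = pₙ` every window `(j, j + pₙ]` covers the rest of its block,
so `Sₙ ≤ ∑ (1 - gᵢ) + o(1)`, which gives the upper bound; for `pₙ ≪ L ≪ n` only the last `pₙ`
indices of a block are not covered, so `∑ (1 - gᵢ) ≤ Sₙ + o(1)`, and together with
`∑ (1 - gᵢ)² ≤ (n / L)(L F̄ₙ)² → 0` this gives the lower bound.
-/

open MeasureTheory Filter Finset Asymptotics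

open scoped Topology

section BlockDecomposition

variable {M : Type*} [AddCommMonoid M]

-- Intervals are half-open, `(a, b] = Ioc a b`, so that consecutive ones concatenate.
def block (L q i : ℕ) : Finset ℕ := Finset.Ioc (i * L + q) ((i + 1) * L)

lemma sum_Ioc_zero_mul_eq_sum_range (h : ℕ → M) (L k : ℕ) :
    ∑ j ∈ Ioc 0 (k * L), h j = ∑ i ∈ range k, ∑ j ∈ Ioc (i * L) ((i + 1) * L), h j := by
  induction k with
  | zero => simp
  | succ k ih =>
    rw [sum_range_succ, ← ih, sum_Ioc_consecutive _ (Nat.zero_le _)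
      (Nat.mul_le_mul_right L k.le_succ)]

lemma sum_Ioc_eq_sum_block_add {h : ℕ → M} {L q k n : ℕ} (hqL : q ≤ L) (hkn : k * L ≤ n) :
    ∑ j ∈ Ioc 0 n, h j = ∑ i ∈ range k, ∑ j ∈ block L q i, h j +
      (∑ i ∈ range k, ∑ j ∈ Ioc (i * L) (i * L + q), h j + ∑ j ∈ Ioc (k * L) n, h j) := by
  have hgap (i : ℕ) : ∑ j ∈ Ioc (i * L) ((i + 1) * L), h j =
      ∑ j ∈ Ioc (i * L) (i * L + q), h j + ∑ j ∈ block L q i, h j :=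
    (sum_Ioc_consecutive _ (by omega) (by rw [add_mul, one_mul]; omega)).symm
  rw [← sum_Ioc_consecutive _ (Nat.zero_le _) hkn, sum_Ioc_zero_mul_eq_sum_range,
    sum_congr rfl fun i _ => hgap i, sum_add_distrib]
  abel

end BlockDecomposition

section BlockSums

variable {h : ℕ → ℝ} {L q n : ℕ}

lemma sum_block_le_sum {k : ℕ} (h0 : ∀ j, 0 ≤ h j) (hqL : q ≤ L) (hkn : k * L ≤ n) :
    ∑ i ∈ range k, ∑ j ∈ block L q i, h j ≤ ∑ j ∈ Ioc 0 n, h j := by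
  rw [sum_Ioc_eq_sum_block_add hqL hkn, le_add_iff_nonneg_right]
  exact add_nonneg (sum_nonneg fun i _ => sum_nonneg fun j _ => h0 j) (sum_nonneg fun j _ => h0 j)

lemma sum_le_sum_block_add {c : ℝ} (hc : ∀ j, 0 < j → h j ≤ c) (hc0 : 0 ≤ c) (hqL : q ≤ L)
    (hL : 0 < L) :
    ∑ j ∈ Ioc 0 n, h j ≤
      ∑ i ∈ range (n / L), ∑ j ∈ block L q i, h j + ((n / L : ℕ) * q + L) * c := by
  have hle {a b : ℕ} : ∑ j ∈ Ioc a b, h j ≤ (b - a : ℕ) * c := by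
    simpa [Nat.card_Ioc] using sum_le_card_nsmul (Ioc a b) h c
      fun j hj => hc j (by simp only [Finset.mem_Ioc] at hj; omega)
  have hrem : ((n - n / L * L : ℕ) : ℝ) ≤ L := by
    have := Nat.mod_lt n hL
    have := Nat.div_add_mod' n L
    exact_mod_cast (by omega : n - n / L * L ≤ L)
  rw [sum_Ioc_eq_sum_block_add hqL (Nat.div_mul_le_self n L), add_le_add_iff_left]
  calc ∑ i ∈ range (n / L), ∑ j ∈ Ioc (i * L) (i * L + q), h j + ∑ j ∈ Ioc (n / L * L) n, h j
      ≤ ∑ i ∈ range (n / L), (q : ℝ) * c + (n - n / L * L : ℕ) * c := by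
        gcongr with i
        · simpa using hle (a := i * L) (b := i * L + q)
        · exact hle
    _ ≤ ((n / L : ℕ) * q + L) * c := by
        rw [sum_const, card_range, nsmul_eq_mul, add_mul, mul_assoc]
        gcongr

end BlockSums

section Exponential

lemma abs_prod_sub_prod_le {ι : Type*} (s : Finset ι) {a b : ι → ℝ}
    (ha : ∀ i ∈ s, |a i| ≤ 1) (hb : ∀ i ∈ s, |b i| ≤ 1) :
    |∏ i ∈ s, a i - ∏ i ∈ s, b i| ≤ ∑ i ∈ s, |a i - b i| := by
  classical
  induction s using Finset.induction_on with
  | empty => simp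
  | insert i s hi ih =>
    simp only [forall_mem_insert] at ha hb
    rw [prod_insert hi, prod_insert hi, sum_insert hi]
    have hA : |∏ j ∈ s, a j| ≤ 1 := by
      rw [abs_prod]; exact prod_le_one (fun _ _ => abs_nonneg _) ha.2
    calc |a i * ∏ j ∈ s, a j - b i * ∏ j ∈ s, b j|
        = |(a i - b i) * ∏ j ∈ s, a j + b i * (∏ j ∈ s, a j - ∏ j ∈ s, b j)| := by
          congr 1; ring
      _ ≤ |a i - b i| * 1 + 1 * ∑ j ∈ s, |a j - b j| := by
        refine (abs_add_le _ _).trans ?_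
        rw [abs_mul, abs_mul]
        gcongr
        exacts [hb.1, ih ha.2 hb.2]
      _ = _ := by ring

lemma prod_le_exp_neg_sum_one_sub {ι : Type*} (s : Finset ι) {g : ι → ℝ}
    (hg : ∀ i ∈ s, 0 ≤ g i) :
    ∏ i ∈ s, g i ≤ Real.exp (-∑ i ∈ s, (1 - g i)) := by
  rw [← sum_neg_distrib, Real.exp_sum]
  exact prod_le_prod hg fun i _ => by simpa using Real.one_sub_le_exp_neg (1 - g i)

lemma exp_neg_sum_one_sub_le_prod_add {ι : Type*} (s : Finset ι) {g : ι → ℝ}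
    (hg : ∀ i ∈ s, 0 ≤ g i ∧ g i ≤ 1) :
    Real.exp (-∑ i ∈ s, (1 - g i)) ≤ ∏ i ∈ s, g i + ∑ i ∈ s, (1 - g i) ^ 2 := by
  rw [← sum_neg_distrib, Real.exp_sum]
  have key := abs_prod_sub_prod_le s (a := fun i => Real.exp (-(1 - g i))) (b := g)
    (fun i hi => by
      rw [abs_of_pos (Real.exp_pos _), Real.exp_le_one_iff]; linarith [(hg i hi).2])
    (fun i hi => abs_le.2 ⟨by linarith [(hg i hi).1], (hg i hi).2⟩)
  have hterm : ∀ i ∈ s, |Real.exp (-(1 - g i)) - g i| ≤ (1 - g i) ^ 2 := fun i hi => by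
    have h := Real.abs_exp_sub_one_sub_id_le (x := -(1 - g i))
      (abs_le.2 ⟨by linarith [(hg i hi).1], by linarith [(hg i hi).2]⟩)
    rw [show (1 - g i) ^ 2 = (g i - 1) ^ 2 by ring]
    simpa [sub_sub_eq_add_sub, add_comm] using h
  linarith [(abs_le.1 key).2, sum_le_sum hterm]

lemma exp_neg_le_exp_neg_add {a b m : ℝ} (ha : 0 ≤ a) (hm : 0 ≤ m) (hb : b ≤ a + m) :
    Real.exp (-a) ≤ Real.exp (-b) + m := by
  rcases le_or_gt b a with hab | hab
  · linarith [Real.exp_le_exp.2 (neg_le_neg hab)]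
  · have h1 : Real.exp (-b) = Real.exp (-a) * Real.exp (a - b) := by
      rw [← Real.exp_add]; ring_nf
    have h2 := Real.add_one_le_exp (a - b)
    have h3 : Real.exp (-a) ≤ 1 := Real.exp_le_one_iff.2 (by linarith)
    nlinarith [Real.exp_pos (-a)]

lemma abs_one_sub_rpow_sub_exp_neg_le {u S : ℝ} (hu0 : 0 < u) (hu1 : u < 1) (hS : 0 ≤ S) :
    |(1 - u) ^ (S / u) - Real.exp (-S)| ≤ S * (u / (1 - u)) := by
  have h1u : 0 < 1 - u := by linarith
  set a := -(S / u * Real.log (1 - u))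
  have hrpow : (1 - u) ^ (S / u) = Real.exp (-a) := by
    rw [Real.rpow_def_of_pos h1u, neg_neg, mul_comm]
  have hSu : 0 ≤ S / u := div_nonneg hS hu0.le
  have hSa : S ≤ a := by
    have := mul_le_mul_of_nonneg_left (Real.log_le_sub_one_of_pos h1u) hSu
    rw [show S / u * (1 - u - 1) = -S by field_simp; ring] at this
    linarith
  have haS : a ≤ S / (1 - u) := by
    have := mul_le_mul_of_nonneg_left (Real.one_sub_inv_le_log_of_pos h1u) hSu
    rw [show S / u * (1 - (1 - u)⁻¹) = -(S / (1 - u)) by field_simp; ring] at this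
    linarith
  have hdiff : S / (1 - u) - S = S * (u / (1 - u)) := by field_simp; ring
  rw [hrpow, abs_sub_comm, abs_of_nonneg (by linarith [Real.exp_le_exp.2 (neg_le_neg hSa)])]
  linarith [exp_neg_le_exp_neg_add hS (by linarith : 0 ≤ a - S) (le_add_of_sub_left_le le_rfl)]

end Exponential

section Exceedances

variable {Ω : Type*} {X : ℕ → Ω → ℝ} {x u : ℝ}

lemma allLe_anti {S T : Set ℕ} (h : S ⊆ T) : allLe X T x ⊆ allLe X S x :=
  fun _ hω i hi => hω i (h hi)

variable [MeasurableSpace Ω] {P : Measure Ω}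

lemma pr_nonneg (A : Set Ω) : 0 ≤ pr P A := measureReal_nonneg

variable [IsProbabilityMeasure P]

lemma pr_mono {A B : Set Ω} (h : A ⊆ B) : pr P A ≤ pr P B := measureReal_mono h

lemma pr_allLe_le_add (hu : ∀ i, 0 < i → pr P {ω | x < X i ω} ≤ u) {S T : Set ℕ}
    {s : Finset ℕ} (hT : T ⊆ S ∪ ↑s) (hs : ∀ i ∈ s, 0 < i) :
    pr P (allLe X S x) ≤ pr P (allLe X T x) + s.card * u := by
  have hsub : allLe X S x ⊆ allLe X T x ∪ ⋃ i ∈ s, {ω | x < X i ω} := by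
    intro ω hω
    by_cases h : ∃ i ∈ s, x < X i ω
    · obtain ⟨i, hi, hxi⟩ := h
      exact .inr (Set.mem_biUnion hi hxi)
    · exact .inl fun i hi => (hT hi).elim (hω i) fun his => not_lt.1 fun hxi => h ⟨i, his, hxi⟩
  calc pr P (allLe X S x)
      ≤ pr P (allLe X T x ∪ ⋃ i ∈ s, {ω | x < X i ω}) := pr_mono hsub
    _ ≤ pr P (allLe X T x) + ∑ i ∈ s, pr P {ω | x < X i ω} :=
        (measureReal_union_le _ _).trans (add_le_add le_rfl (measureReal_biUnion_finset_le _ _))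
    _ ≤ pr P (allLe X T x) + ∑ _i ∈ s, u := by gcongr with i hi; exact hu i (hs i hi)
    _ = pr P (allLe X T x) + s.card * u := by rw [sum_const, nsmul_eq_mul]

lemma one_sub_pr_allLe_Ioc_le (hu : ∀ i, 0 < i → pr P {ω | x < X i ω} ≤ u) (a b : ℕ) :
    1 - pr P (allLe X (Set.Ioc a b) x) ≤ (b - a : ℕ) * u := by
  have h := pr_allLe_le_add hu (S := ∅) (T := Set.Ioc a b) (s := Ioc a b) (by simp)
    fun j hj => Nat.zero_lt_of_lt (Finset.mem_Ioc.1 hj).1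
  have : pr P (allLe X ∅ x) = 1 := by simp [allLe, pr]
  rw [Nat.card_Ioc] at h
  linarith

lemma pr_allLe_Ioc_le_add (hu : ∀ i, 0 < i → pr P {ω | x < X i ω} ≤ u) (a b n : ℕ) :
    pr P (allLe X (Set.Ioc a b) x) ≤ pr P (allLe X (Set.Ioc 0 n) x) + (a + (n - b) : ℕ) * u := by
  have hu0 : 0 ≤ u := (pr_nonneg _).trans (hu 1 one_pos)
  refine (pr_allLe_le_add hu (T := Set.Ioc 0 n) (s := Ioc 0 a ∪ Ioc b n)
    (fun j => by simp only [Set.mem_Ioc, coe_union, coe_Ioc, Set.mem_union]; omega)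
    (fun j hj => by simp only [mem_union, Finset.mem_Ioc] at hj; omega)).trans ?_
  gcongr
  refine (card_union_le _ _).trans ?_
  simp only [Nat.card_Ioc, Nat.sub_zero, le_refl]

lemma pr_allLe_insert_add (hm : ∀ i, Measurable (X i)) (i : ℕ) (S : Set ℕ) :
    pr P (allLe X (insert i S) x) + pr P ({ω | x < X i ω} ∩ allLe X S x) =
      pr P (allLe X S x) := by
  have hins : allLe X (insert i S) x = allLe X S x ∩ {ω | X i ω ≤ x} := by
    ext; simp [allLe, and_comm]
  have hdiff : {ω | x < X i ω} ∩ allLe X S x = allLe X S x \ {ω | X i ω ≤ x} := by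
    ext; simp [and_comm]
  rw [hins, hdiff]
  exact measureReal_inter_add_sdiff (measurableSet_le (hm i) measurable_const)

lemma pr_exceed_eq {F : ℝ → ℝ} (hm : ∀ i, Measurable (X i))
    (hF : ∀ i, 1 ≤ i → ∀ t : ℝ, pr P {ω | X i ω ≤ t} = F t) {i : ℕ} (hi : 0 < i) :
    pr P {ω | x < X i ω} = 1 - F x := by
  have : {ω | x < X i ω} = {ω | X i ω ≤ x}ᶜ := by ext; simp
  rw [this, ← hF i hi]
  exact probReal_compl_eq_one_sub (measurableSet_le (hm i) measurable_const)

lemma one_sub_pr_allLe_Ioc (hm : ∀ i, Measurable (X i)) (a b : ℕ) :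
    1 - pr P (allLe X (Set.Ioc a b) x) =
      ∑ j ∈ Ioc a b, pr P ({ω | x < X j ω} ∩ allLe X (Set.Ioc j b) x) := by
  induction hd : b - a generalizing a with
  | zero =>
    rw [Set.Ioc_eq_empty (by omega), Finset.Ioc_eq_empty (by omega)]
    simp [allLe, pr]
  | succ d ih =>
    have hIoc : Set.Ioc a b = insert (a + 1) (Set.Ioc (a + 1) b) := by
      ext; simp only [Set.mem_Ioc, Set.mem_insert_iff]; omega
    rw [← Finset.Icc_add_one_left_eq_Ioc, ← Finset.Ioc_insert_left (by omega),
      sum_insert (by simp), ← ih (a + 1) (by omega), hIoc,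
      ← pr_allLe_insert_add hm (a + 1) (Set.Ioc (a + 1) b)]
    ring

end Exceedances

def runEnd {Ω : Type*} (X : ℕ → Ω → ℝ) (x : ℝ) (p j : ℕ) : Set Ω :=
  {ω | x < X j ω} ∩ allLe X (Set.Ioc j (j + p)) x

section BlockProbabilities

variable {Ω : Type*} [MeasurableSpace Ω] {P : Measure Ω} [IsProbabilityMeasure P]
  {X : ℕ → Ω → ℝ} {x u : ℝ} {p a b : ℕ}

lemma sum_pr_runEnd_le_one_sub (hm : ∀ i, Measurable (X i)) (hb : b ≤ a + p) :
    ∑ j ∈ Ioc a b, pr P (runEnd X x p j) ≤ 1 - pr P (allLe X (Set.Ioc a b) x) := by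
  rw [one_sub_pr_allLe_Ioc hm]
  refine sum_le_sum fun j hj => pr_mono <| Set.inter_subset_inter_right _ <|
    allLe_anti <| Set.Ioc_subset_Ioc_right ?_
  simp only [Finset.mem_Ioc] at hj
  omega

lemma one_sub_le_sum_pr_runEnd_add (hm : ∀ i, Measurable (X i))
    (hu : ∀ i, 0 < i → pr P {ω | x < X i ω} ≤ u) (hab : a ≤ b) :
    1 - pr P (allLe X (Set.Ioc a b) x) ≤ ∑ j ∈ Ioc a b, pr P (runEnd X x p j) + p * u := by
  have hu0 : 0 ≤ u := (pr_nonneg _).trans (hu 1 one_pos)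
  -- For `j ≤ c` the window `(j, j + p]` lies in `(j, b]`; the at most `p` indices in `(c, b]`
  -- cost `u` each.
  set c := max a (b - p)
  have hac : a ≤ c := le_max_left _ _
  have hcb : c ≤ b := max_le hab (Nat.sub_le b p)
  rw [one_sub_pr_allLe_Ioc hm, ← sum_Ioc_consecutive _ hac hcb]
  gcongr ?_ + ?_
  · calc ∑ j ∈ Ioc a c, pr P ({ω | x < X j ω} ∩ allLe X (Set.Ioc j b) x)
        ≤ ∑ j ∈ Ioc a c, pr P (runEnd X x p j) := by
          refine sum_le_sum fun j hj => pr_mono <| Set.inter_subset_inter_right _ <|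
            allLe_anti <| Set.Ioc_subset_Ioc_right ?_
          simp only [Finset.mem_Ioc, c] at hj
          omega
      _ ≤ ∑ j ∈ Ioc a b, pr P (runEnd X x p j) :=
          sum_le_sum_of_subset_of_nonneg (Ioc_subset_Ioc_right hcb) fun _ _ _ => pr_nonneg _
  · calc ∑ j ∈ Ioc c b, pr P ({ω | x < X j ω} ∩ allLe X (Set.Ioc j b) x)
        ≤ ∑ _j ∈ Ioc c b, u :=
          sum_le_sum fun j hj => (pr_mono Set.inter_subset_left).trans <|
            hu j (by simp only [Finset.mem_Ioc] at hj; omega)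
      _ ≤ p * u := by
          rw [sum_const, Nat.card_Ioc, nsmul_eq_mul]
          gcongr
          exact_mod_cast (by omega : b - c ≤ p)

lemma sum_pr_runEnd_le (hu : ∀ i, 0 < i → pr P {ω | x < X i ω} ≤ u) (n : ℕ) :
    ∑ j ∈ Ioc 0 n, pr P (runEnd X x p j) ≤ n * u := by
  calc ∑ j ∈ Ioc 0 n, pr P (runEnd X x p j) ≤ ∑ _j ∈ Ioc 0 n, u :=
        sum_le_sum fun j hj => (pr_mono Set.inter_subset_left).trans (hu j (Finset.mem_Ioc.1 hj).1)
    _ = n * u := by rw [sum_const, Nat.card_Ioc, nsmul_eq_mul, Nat.sub_zero]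

lemma sum_pr_runEnd_le_sum_one_sub_add (hm : ∀ i, Measurable (X i))
    (hu : ∀ i, 0 < i → pr P {ω | x < X i ω} ≤ u) {q n : ℕ} (hqp : q ≤ p) (hp : 0 < p) :
    ∑ j ∈ Ioc 0 n, pr P (runEnd X x p j) ≤
      ∑ i ∈ range (n / p), (1 - pr P (allLe X ↑(block p q i) x)) + ((n / p : ℕ) * q + p) * u := by
  refine (sum_le_sum_block_add (fun j hj => (pr_mono Set.inter_subset_left).trans (hu j hj))
    ((pr_nonneg _).trans (hu 1 one_pos)) hqp hp).trans ?_
  gcongr with i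
  simp only [block, coe_Ioc]
  exact sum_pr_runEnd_le_one_sub hm (by rw [add_mul, one_mul]; omega)

lemma sum_one_sub_le_sum_pr_runEnd_add (hm : ∀ i, Measurable (X i))
    (hu : ∀ i, 0 < i → pr P {ω | x < X i ω} ≤ u) {q k L n : ℕ} (hqL : q ≤ L)
    (hkn : k * L ≤ n) :
    ∑ i ∈ range k, (1 - pr P (allLe X ↑(block L q i) x)) ≤
      ∑ j ∈ Ioc 0 n, pr P (runEnd X x p j) + k * p * u := by
  calc ∑ i ∈ range k, (1 - pr P (allLe X ↑(block L q i) x))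
      ≤ ∑ i ∈ range k, (∑ j ∈ block L q i, pr P (runEnd X x p j) + p * u) :=
        sum_le_sum fun i _ => by
          simp only [block, coe_Ioc]
          exact one_sub_le_sum_pr_runEnd_add hm hu (by rw [add_mul, one_mul]; omega)
    _ = ∑ i ∈ range k, ∑ j ∈ block L q i, pr P (runEnd X x p j) + k * p * u := by
        rw [sum_add_distrib, sum_const, card_range, nsmul_eq_mul, mul_assoc]
    _ ≤ ∑ j ∈ Ioc 0 n, pr P (runEnd X x p j) + k * p * u := by
        gcongr
        exact sum_block_le_sum (fun j => pr_nonneg _) hqL hkn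

lemma abs_pr_allLe_sub_prod_block_le {xs : ℕ → ℝ} {q : ℕ → ℕ} {α : ℕ → ℝ}
    (hbd : AIMBound P X xs q α) {n L : ℕ} (hu : ∀ i, 0 < i → pr P {ω | xs n < X i ω} ≤ u)
    (hL : 2 * q n < L) (m : ℕ) (hmn : (m + 1) * L ≤ n) :
    |pr P (allLe X (Set.Ioc (q n) ((m + 1) * L)) (xs n)) -
        ∏ i ∈ range (m + 1), pr P (allLe X ↑(block L (q n) i) (xs n))| ≤
      m * (|α n| + q n * u) := by
  induction m with
  | zero => simp [block]
  | succ m ih =>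
    have hL' : L ≤ (m + 1) * L := Nat.le_mul_of_pos_left L m.succ_pos
    have hsucc : (m + 1 + 1) * L = (m + 1) * L + L := by ring
    -- Filling the last gap costs at most `q u` (`A` vs `B`), AIM splits off the last block
    -- (`B ≈ C g`), and `C ≈ G` is the induction hypothesis.
    set A := pr P (allLe X (Set.Ioc (q n) ((m + 1 + 1) * L)) (xs n))
    set B := pr P (allLe X (Set.Ioc (q n) ((m + 1) * L) ∪ ↑(block L (q n) (m + 1))) (xs n))
    set C := pr P (allLe X (Set.Ioc (q n) ((m + 1) * L)) (xs n))
    set g := pr P (allLe X ↑(block L (q n) (m + 1)) (xs n))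
    set G := ∏ i ∈ range (m + 1), pr P (allLe X ↑(block L (q n) i) (xs n))
    have hblock : (↑(block L (q n) (m + 1)) : Set ℕ) =
        Set.Ioc ((m + 1) * L + q n) ((m + 1 + 1) * L) := by simp [block]
    have hAB : |A - B| ≤ q n * u := by
      have hsub : Set.Ioc (q n) ((m + 1) * L) ∪ ↑(block L (q n) (m + 1)) ⊆
          Set.Ioc (q n) ((m + 1 + 1) * L) := by
        rw [hblock]; intro i; simp only [Set.mem_union, Set.mem_Ioc]; omega
      have hBA := pr_allLe_le_add (P := P) (X := X) hu (s := Ioc ((m + 1) * L) ((m + 1) * L + q n))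
        (S := Set.Ioc (q n) ((m + 1) * L) ∪ ↑(block L (q n) (m + 1)))
        (T := Set.Ioc (q n) ((m + 1 + 1) * L))
        (by rw [hblock]; intro i; simp only [Set.mem_union, Set.mem_Ioc, coe_Ioc]; omega)
        (fun i hi => by simp only [Finset.mem_Ioc] at hi; omega)
      rw [Nat.card_Ioc, Nat.add_sub_cancel_left] at hBA
      rw [abs_sub_comm, abs_of_nonneg (sub_nonneg.2 (pr_mono (allLe_anti hsub)))]
      linarith
    have hBC : |B - C * g| ≤ |α n| := by
      have h := hbd n (q n + 1) ((m + 1) * L) ((m + 1 + 1) * L)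
        (by omega) (by omega) (by omega) hmn (by omega) (by omega)
      rw [Set.Icc_add_one_left_eq_Ioc, Set.Icc_add_one_left_eq_Ioc, ← hblock] at h
      exact h.trans (le_abs_self _)
    have hCG : |C * g - G * g| ≤ m * (|α n| + q n * u) := by
      rw [← sub_mul, abs_mul, abs_of_nonneg (pr_nonneg _)]
      exact (mul_le_of_le_one_right (abs_nonneg _) measureReal_le_one).trans (ih (by omega))
    rw [prod_range_succ]
    calc |A - G * g| ≤ |A - B| + |B - C * g| + |C * g - G * g| := by
          linarith [abs_sub_le A B (G * g), abs_sub_le B (C * g) (G * g)]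
      _ ≤ q n * u + |α n| + m * (|α n| + q n * u) := by gcongr
      _ = ↑(m + 1) * (|α n| + q n * u) := by push_cast; ring

end BlockProbabilities

section KeyBounds

variable {Ω : Type*} [MeasurableSpace Ω] {P : Measure Ω} [IsProbabilityMeasure P]
  {X : ℕ → Ω → ℝ} {xs : ℕ → ℝ} {q : ℕ → ℕ} {α : ℕ → ℝ} {u : ℝ} {n p L : ℕ}

lemma pr_allLe_le_exp_neg_add (hm : ∀ i, Measurable (X i)) (hbd : AIMBound P X xs q α)
    (hu : ∀ i, 0 < i → pr P {ω | xs n < X i ω} ≤ u) (hqp : 2 * q n < p) (hpn : p ≤ n) :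
    pr P (allLe X (Set.Ioc 0 n) (xs n)) ≤
      Real.exp (-∑ j ∈ Ioc 0 n, pr P (runEnd X (xs n) p j)) +
        n / p * (|α n| + q n * u) + (n / p * q n + p) * u := by
  have hu0 : 0 ≤ u := (pr_nonneg _).trans (hu 1 one_pos)
  have hp0 : 0 < p := by omega
  obtain ⟨m, hkm⟩ : ∃ m, n / p = m + 1 := Nat.exists_eq_succ_of_ne_zero (Nat.div_pos hpn hp0).ne'
  have hmp : (m + 1) * p ≤ n := hkm ▸ Nat.div_mul_le_self n p
  have hk : ((m + 1 : ℕ) : ℝ) ≤ n / p := hkm ▸ Nat.cast_div_le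
  have hm_le : (m : ℝ) ≤ n / p := by push_cast at hk; linarith
  have hS := sum_pr_runEnd_le_sum_one_sub_add (P := P) (q := q n) (n := n) hm hu (by omega) hp0
  rw [hkm] at hS
  have hprod := abs_pr_allLe_sub_prod_block_le hbd hu hqp m hmp
  calc pr P (allLe X (Set.Ioc 0 n) (xs n))
      ≤ pr P (allLe X (Set.Ioc (q n) ((m + 1) * p)) (xs n)) :=
        pr_mono (allLe_anti (Set.Ioc_subset_Ioc (Nat.zero_le _) hmp))
    _ ≤ ∏ i ∈ range (m + 1), pr P (allLe X ↑(block p (q n) i) (xs n)) +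
          m * (|α n| + q n * u) := by
        linarith [(abs_le.1 hprod).2]
    _ ≤ Real.exp (-∑ i ∈ range (m + 1), (1 - pr P (allLe X ↑(block p (q n) i) (xs n)))) +
          n / p * (|α n| + q n * u) := by
        gcongr
        exact prod_le_exp_neg_sum_one_sub _ fun i _ => pr_nonneg _
    _ ≤ Real.exp (-∑ j ∈ Ioc 0 n, pr P (runEnd X (xs n) p j)) +
          ((m + 1 : ℕ) * q n + p) * u + n / p * (|α n| + q n * u) := by
        gcongr
        exact exp_neg_le_exp_neg_add (sum_nonneg fun i _ => sub_nonneg.2 measureReal_le_one)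
          (by positivity) hS
    _ ≤ _ := by
        have : ((m + 1 : ℕ) * q n + p) * u ≤ (n / p * q n + p) * u := by gcongr
        linarith

lemma exp_neg_le_pr_allLe_add (hm : ∀ i, Measurable (X i)) (hbd : AIMBound P X xs q α)
    (hu : ∀ i, 0 < i → pr P {ω | xs n < X i ω} ≤ u) (hqL : 2 * q n < L) (hpL : p ≤ L)
    (hLn : L ≤ n) :
    Real.exp (-∑ j ∈ Ioc 0 n, pr P (runEnd X (xs n) p j)) ≤
      pr P (allLe X (Set.Ioc 0 n) (xs n)) + (q n + L) * u +
        n / L * (|α n| + q n * u) + n / L * (L * u) ^ 2 + n / L * p * u := by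
  have hu0 : 0 ≤ u := (pr_nonneg _).trans (hu 1 one_pos)
  have hL0 : 0 < L := by omega
  obtain ⟨m, hkm⟩ : ∃ m, n / L = m + 1 := Nat.exists_eq_succ_of_ne_zero (Nat.div_pos hLn hL0).ne'
  have hmL : (m + 1) * L ≤ n := hkm ▸ Nat.div_mul_le_self n L
  have hk : ((m + 1 : ℕ) : ℝ) ≤ n / L := hkm ▸ Nat.cast_div_le
  have hm_le : (m : ℝ) ≤ n / L := by push_cast at hk; linarith
  set g := fun i => pr P (allLe X ↑(block L (q n) i) (xs n))
  have hg (i : ℕ) : 0 ≤ g i ∧ g i ≤ 1 := ⟨pr_nonneg _, measureReal_le_one⟩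
  have hSD : ∑ i ∈ range (m + 1), (1 - g i) ≤
      ∑ j ∈ Ioc 0 n, pr P (runEnd X (xs n) p j) + n / L * p * u :=
    (sum_one_sub_le_sum_pr_runEnd_add hm hu (by omega) hmL).trans (by gcongr)
  have hsq : ∑ i ∈ range (m + 1), (1 - g i) ^ 2 ≤ n / L * (L * u) ^ 2 := by
    have hsmall (i : ℕ) : 1 - g i ≤ L * u := by
      simp only [g, block, coe_Ioc]
      refine (one_sub_pr_allLe_Ioc_le hu _ _).trans ?_
      gcongr
      exact_mod_cast (by rw [add_mul, one_mul]; omega)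
    calc ∑ i ∈ range (m + 1), (1 - g i) ^ 2 ≤ ∑ _i ∈ range (m + 1), (L * u) ^ 2 :=
          sum_le_sum fun i _ => pow_le_pow_left₀ (sub_nonneg.2 (hg i).2) (hsmall i) 2
      _ ≤ n / L * (L * u) ^ 2 := by
          rw [sum_const, card_range, nsmul_eq_mul]; gcongr
  have hprod := abs_pr_allLe_sub_prod_block_le hbd hu hqL m hmL
  have hfull := pr_allLe_Ioc_le_add hu (q n) ((m + 1) * L) n
  have hrem : ((q n + (n - (m + 1) * L) : ℕ) : ℝ) * u ≤ (q n + L) * u := by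
    have := Nat.mod_lt n hL0
    have := hkm ▸ Nat.div_add_mod' n L
    gcongr
    exact_mod_cast (by omega : q n + (n - (m + 1) * L) ≤ q n + L)
  have hαq : (m : ℝ) * (|α n| + q n * u) ≤ n / L * (|α n| + q n * u) := by gcongr
  calc Real.exp (-∑ j ∈ Ioc 0 n, pr P (runEnd X (xs n) p j))
      ≤ Real.exp (-∑ i ∈ range (m + 1), (1 - g i)) + n / L * p * u :=
        exp_neg_le_exp_neg_add (sum_nonneg fun j _ => pr_nonneg _) (by positivity) hSD
    _ ≤ ∏ i ∈ range (m + 1), g i + ∑ i ∈ range (m + 1), (1 - g i) ^ 2 + n / L * p * u := by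
        gcongr
        exact exp_neg_sum_one_sub_le_prod_add _ fun i _ => hg i
    _ ≤ _ := by linarith [(abs_le.1 hprod).1]

end KeyBounds

lemma exists_isLittleO_isLittleO {p : ℕ → ℕ}
    (hp : (fun n => (p n : ℝ)) =o[atTop] (fun n => (n : ℝ))) :
    ∃ L : ℕ → ℕ, (fun n => (p n : ℝ)) =o[atTop] (fun n => (L n : ℝ)) ∧
      (fun n => (L n : ℝ)) =o[atTop] (fun n => (n : ℝ)) := by
  let L n := max (p n) (Nat.sqrt (p n * n))
  refine ⟨L, IsLittleO.of_pow (n := 2) ?_ two_ne_zero, IsLittleO.of_pow (n := 2) ?_ two_ne_zero⟩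
  · have hbd (n : ℕ) : p n * n ≤ 4 * (L n * L n) := by
      have h1 := Nat.lt_succ_sqrt (p n * n)
      have h2 : Nat.sqrt (p n * n) ≤ L n := le_max_right _ _
      rcases Nat.eq_zero_or_pos (Nat.sqrt (p n * n)) with h0 | h0
      · rw [h0] at h1; omega
      · nlinarith
    rw [sq, sq]
    refine (hp.mul_isBigO (isBigO_refl _ _)).trans_isBigO <| IsBigO.of_bound 4 <|
      Eventually.of_forall fun n => ?_
    simp only [Pi.mul_apply, norm_mul, Real.norm_natCast]
    rw [mul_comm]
    exact_mod_cast hbd n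
  · have hbd (n : ℕ) : L n * L n ≤ p n * (p n + n) := by
      have := Nat.sqrt_le (p n * n)
      rcases le_total (p n) (Nat.sqrt (p n * n)) with h | h
      · simp only [L, max_eq_right h]; nlinarith
      · simp only [L, max_eq_left h]; nlinarith
    rw [sq, sq]
    refine (IsBigO.of_bound 1 <| Eventually.of_forall fun n => ?_).trans_isLittleO
      (hp.mul_isBigO (hp.isBigO.add (isBigO_refl _ _)))
    simp only [Pi.mul_apply, Real.norm_natCast, one_mul, norm_mul]
    exact_mod_cast hbd n

lemma tendsto_zero_of_tendsto_natCast_mul {a : ℕ → ℝ} {τ : ℝ}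
    (h : Tendsto (fun n : ℕ => (n : ℝ) * a n) atTop (𝓝 τ)) : Tendsto a atTop (𝓝 0) := by
  have := h.mul (tendsto_inv_atTop_zero.comp tendsto_natCast_atTop_atTop)
  rw [mul_zero] at this
  refine this.congr' ?_
  filter_upwards [eventually_gt_atTop 0] with n hn
  simp only [Function.comp_apply]
  field_simp

lemma tendsto_one_sub_rpow_div_sub_exp_neg {ι : Type*} {l : Filter ι} {u S v : ι → ℝ} {τ : ℝ}
    (hu : Tendsto u l (𝓝 0)) (hu0 : ∀ᶠ i in l, 0 < u i) (hS0 : ∀ i, 0 ≤ S i)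
    (hSv : ∀ i, S i ≤ v i) (hv : Tendsto v l (𝓝 τ)) :
    Tendsto (fun i => (1 - u i) ^ (S i / u i) - Real.exp (-S i)) l (𝓝 0) := by
  have hbound : Tendsto (fun i => v i * (u i / (1 - u i))) l (𝓝 0) := by
    simpa using hv.mul (hu.div (tendsto_const_nhds.sub hu) (by norm_num))
  refine squeeze_zero_norm' ?_ hbound
  filter_upwards [hu0, hu.eventually (gt_mem_nhds one_pos)] with i hi0 hi1
  exact (abs_one_sub_rpow_sub_exp_neg_le hi0 hi1 (hS0 i)).trans <|
    mul_le_mul_of_nonneg_right (hSv i) (div_nonneg hi0.le (by linarith))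

lemma eventually_mul_le_of_isLittleO {f g : ℕ → ℕ}
    (h : (fun n => (f n : ℝ)) =o[atTop] (fun n => (g n : ℝ))) (c : ℕ) :
    ∀ᶠ n in atTop, c * f n ≤ g n := by
  filter_upwards [h.bound (by positivity : (0 : ℝ) < 1 / (c + 1))] with n hn
  simp only [Real.norm_natCast] at hn
  rw [div_mul_eq_mul_div, one_mul, le_div_iff₀ (by positivity)] at hn
  have : (c * f n : ℝ) ≤ g n := by nlinarith [(f n).cast_nonneg (α := ℝ)]
  exact_mod_cast this

section Errors

variable {q p L : ℕ → ℕ} {α u : ℕ → ℝ} {τ : ℝ}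

lemma tendsto_upper_error (hτ : Tendsto (fun n : ℕ => (n : ℝ) * u n) atTop (𝓝 τ))
    (hp0 : ∀ n, 0 < p n) (hp : (fun n => (p n : ℝ)) =o[atTop] (fun n => (n : ℝ)))
    (hnα : (fun n : ℕ => (n : ℝ) * α n) =o[atTop] (fun n => (p n : ℝ)))
    (hqp : (fun n => (q n : ℝ)) =o[atTop] (fun n => (p n : ℝ))) :
    Tendsto (fun n : ℕ => n / p n * (|α n| + q n * u n) + (n / p n * q n + p n) * u n)
      atTop (𝓝 0) := by
  have h := ((hnα.tendsto_div_nhds_zero.abs.add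
    ((hqp.tendsto_div_nhds_zero.mul hτ).const_mul 2)).add (hp.tendsto_div_nhds_zero.mul hτ))
  simp only [abs_zero, zero_mul, mul_zero, add_zero] at h
  refine h.congr' ?_
  filter_upwards [eventually_gt_atTop 0] with n hn
  have : (n : ℝ) ≠ 0 := by positivity
  have : (p n : ℝ) ≠ 0 := by have := hp0 n; positivity
  rw [abs_div, abs_mul, Nat.abs_cast, Nat.abs_cast]
  field_simp
  ring

lemma tendsto_lower_error (hτ : Tendsto (fun n : ℕ => (n : ℝ) * u n) atTop (𝓝 τ))
    (hp0 : ∀ n, 0 < p n) (hq : (fun n => (q n : ℝ)) =o[atTop] (fun n => (n : ℝ)))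
    (hnα : (fun n : ℕ => (n : ℝ) * α n) =o[atTop] (fun n => (p n : ℝ)))
    (hqp : (fun n => (q n : ℝ)) =o[atTop] (fun n => (p n : ℝ)))
    (hpL : (fun n => (p n : ℝ)) =o[atTop] (fun n => (L n : ℝ)))
    (hLn : (fun n => (L n : ℝ)) =o[atTop] (fun n => (n : ℝ))) :
    Tendsto (fun n : ℕ => (q n + L n) * u n + n / L n * (|α n| + q n * u n) +
      n / L n * (L n * u n) ^ 2 + n / L n * p n * u n) atTop (𝓝 0) := by
  have hpL0 := hpL.tendsto_div_nhds_zero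
  have hLn0 := hLn.tendsto_div_nhds_zero
  have h := ((((hq.tendsto_div_nhds_zero.mul hτ).add (hLn0.mul hτ)).add
    ((hpL0.mul hnα.tendsto_div_nhds_zero.abs).add
      ((hqp.tendsto_div_nhds_zero.mul hpL0).mul hτ))).add
    ((hLn0.mul hτ).mul hτ)).add (hpL0.mul hτ)
  simp only [abs_zero, zero_mul, mul_zero, add_zero] at h
  refine h.congr' ?_
  filter_upwards [eventually_gt_atTop 0, eventually_mul_le_of_isLittleO hpL 1] with n hn hpLn
  have : (n : ℝ) ≠ 0 := by positivity
  have : (p n : ℝ) ≠ 0 := by have := hp0 n; positivity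
  have : (L n : ℝ) ≠ 0 := by have := hp0 n; exact_mod_cast (by omega : L n ≠ 0)
  rw [abs_div, abs_mul, Nat.abs_cast, Nat.abs_cast]
  field_simp

end Errors

theorem tendsto_pr_allLe_sub_exp_neg_sum_runEnd
    {Ω : Type*} [MeasurableSpace Ω] {P : Measure Ω} [IsProbabilityMeasure P]
    {X : ℕ → Ω → ℝ} {xs : ℕ → ℝ} {q p : ℕ → ℕ} {α u : ℕ → ℝ} {τ : ℝ}
    (hm : ∀ i, Measurable (X i)) (hbd : AIMBound P X xs q α)
    (hu : ∀ n i, 0 < i → pr P {ω | xs n < X i ω} ≤ u n)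
    (hτ : Tendsto (fun n : ℕ => (n : ℝ) * u n) atTop (𝓝 τ)) (hp0 : ∀ n, 0 < p n)
    (hq : (fun n => (q n : ℝ)) =o[atTop] (fun n => (n : ℝ)))
    (hp : (fun n => (p n : ℝ)) =o[atTop] (fun n => (n : ℝ)))
    (hnα : (fun n : ℕ => (n : ℝ) * α n) =o[atTop] (fun n => (p n : ℝ)))
    (hqp : (fun n => (q n : ℝ)) =o[atTop] (fun n => (p n : ℝ))) :
    Tendsto (fun n => pr P (allLe X (Set.Ioc 0 n) (xs n)) -
      Real.exp (-∑ j ∈ Ioc 0 n, pr P (runEnd X (xs n) (p n) j))) atTop (𝓝 0) := by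
  obtain ⟨L, hpL, hLn⟩ := exists_isLittleO_isLittleO hp
  have hsizes : ∀ᶠ n in atTop, 2 * q n < p n ∧ p n ≤ L n ∧ L n ≤ n := by
    filter_upwards [eventually_mul_le_of_isLittleO hqp 3, eventually_mul_le_of_isLittleO hpL 1,
      eventually_mul_le_of_isLittleO hLn 1] with n h3q hpLn hLnn
    exact ⟨by have := hp0 n; omega, by omega, by omega⟩
  refine tendsto_of_tendsto_of_tendsto_of_le_of_le'
    (by simpa using (tendsto_lower_error hτ hp0 hq hnα hqp hpL hLn).neg)
    (tendsto_upper_error hτ hp0 hp hnα hqp) ?_ ?_ <;>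
    filter_upwards [hsizes] with n ⟨hqpn, hpLn, hLnn⟩
  · linarith [exp_neg_le_pr_allLe_add hm hbd (hu n) (hqpn.trans_le hpLn) hpLn hLnn]
  · linarith [pr_allLe_le_exp_neg_add hm hbd (hu n) hqpn (hpLn.trans hLnn)]

theorem stmt3_general {Ω : Type*} [MeasurableSpace Ω] (P : Measure Ω) [IsProbabilityMeasure P]
    (X : ℕ → Ω → ℝ) (F : ℝ → ℝ) (xs : ℕ → ℝ) (q : ℕ → ℕ) (α : ℕ → ℝ) (p : ℕ → ℕ)
    (τ : ℝ)
    (hmeas : ∀ i, Measurable (X i))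
    (hF : ∀ i, 1 ≤ i → ∀ t : ℝ, pr P {ω | X i ω ≤ t} = F t)
    (hFbarpos : ∀ n, 0 < 1 - F (xs n))
    (hq : (fun n : ℕ => (q n : ℝ)) =o[atTop] (fun n : ℕ => (n : ℝ)))
    (hbd : AIMBound P X xs q α)
    (hFbar : Tendsto (fun n : ℕ => (n : ℝ) * (1 - F (xs n))) atTop (nhds τ))
    (hppos : ∀ m, 1 ≤ p m)
    (hp : (fun n : ℕ => (p n : ℝ)) =o[atTop] (fun n : ℕ => (n : ℝ)))
    (hnα : (fun n : ℕ => (n : ℝ) * α n) =o[atTop] (fun n : ℕ => (p n : ℝ)))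
    (hqp : (fun n : ℕ => (q n : ℝ)) =o[atTop] (fun n : ℕ => (p n : ℝ)))
    (γ : ℕ → ℝ)
    (hγ : ∀ n : ℕ, γ n = (n : ℝ)⁻¹ * ∑ j ∈ Finset.Icc 1 n,
      pr P ({ω | xs n < X j ω} ∩ allLe X (Set.Icc (j + 1) (j + p n)) (xs n)) /
        pr P {ω | xs n < X j ω}) :
    Tendsto (fun n : ℕ =>
      pr P (allLe X (Set.Icc 1 n) (xs n)) - F (xs n) ^ ((n : ℝ) * γ n))
      atTop (nhds 0) := by
  set S := fun n => ∑ j ∈ Ioc 0 n, pr P (runEnd X (xs n) (p n) j)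
  have hexc (n i : ℕ) (hi : 0 < i) : pr P {ω | xs n < X i ω} = 1 - F (xs n) :=
    pr_exceed_eq hmeas hF hi
  have hγS (n : ℕ) (hn : 0 < n) : (n : ℝ) * γ n = S n / (1 - F (xs n)) := by
    rw [hγ n, ← mul_assoc, mul_inv_cancel₀ (by positivity), one_mul, Finset.sum_div,
      show Finset.Icc 1 n = Ioc 0 n from Finset.Icc_add_one_left_eq_Ioc 0 n]
    refine sum_congr rfl fun j hj => ?_
    rw [hexc n j (Finset.mem_Ioc.1 hj).1, runEnd, Set.Icc_add_one_left_eq_Ioc]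
  have hmain := tendsto_pr_allLe_sub_exp_neg_sum_runEnd hmeas hbd (fun n i hi => (hexc n i hi).le)
    hFbar hppos hq hp hnα hqp
  have hrpow := tendsto_one_sub_rpow_div_sub_exp_neg (S := S)
    (tendsto_zero_of_tendsto_natCast_mul hFbar)
    (.of_forall hFbarpos) (fun n => sum_nonneg fun j _ => pr_nonneg _)
    (fun n => sum_pr_runEnd_le (fun i hi => (hexc n i hi).le) n) hFbar
  have hdiff := hmain.sub hrpow
  rw [sub_zero] at hdiff
  refine hdiff.congr' ?_
  filter_upwards [eventually_gt_atTop 0] with n hn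
  rw [hγS n hn, sub_sub_cancel, show Set.Icc 1 n = Set.Ioc 0 n from Set.Icc_add_one_left_eq_Ioc 0 n]
  ring

/-- Theorem MainThm, eq. (result2): under AIM(xₙ), `n·F̄(xₙ) → τ > 0`
with `F̄(xₙ) > 0` for all `n`, and `pₙ = o(n)`, `n·αₙ = o(pₙ)`, `qₙ = o(pₙ)`, one has
`P(Mₙ ≤ xₙ) − F(xₙ)^{n·γₙ} → 0` where
`γₙ = (1/n) ∑_{j=1}^n P(M_{j,j+pₙ} ≤ xₙ | X_j > xₙ)`. -/
theorem stmt3 {Ω : Type*} [MeasurableSpace Ω] (P : Measure Ω) [IsProbabilityMeasure P]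
    (X : ℕ → Ω → ℝ) (F : ℝ → ℝ) (xs : ℕ → ℝ) (q : ℕ → ℕ) (α : ℕ → ℝ) (p : ℕ → ℕ)
    (τ : ℝ) (hτ : 0 < τ)
    (hmeas : ∀ i, Measurable (X i))
    (hF : ∀ i, 1 ≤ i → ∀ t : ℝ, pr P {ω | X i ω ≤ t} = F t)
    (hFbarpos : ∀ n, 0 < 1 - F (xs n))
    (hqpos : ∀ m, 1 ≤ q m)
    (hq : (fun n : ℕ => (q n : ℝ)) =o[atTop] (fun n : ℕ => (n : ℝ)))
    (hα : Tendsto α atTop (nhds 0))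
    (hbd : AIMBound P X xs q α)
    (hFbar : Tendsto (fun n : ℕ => (n : ℝ) * (1 - F (xs n))) atTop (nhds τ))
    (hppos : ∀ m, 1 ≤ p m)
    (hp : (fun n : ℕ => (p n : ℝ)) =o[atTop] (fun n : ℕ => (n : ℝ)))
    (hnα : (fun n : ℕ => (n : ℝ) * α n) =o[atTop] (fun n : ℕ => (p n : ℝ)))
    (hqp : (fun n : ℕ => (q n : ℝ)) =o[atTop] (fun n : ℕ => (p n : ℝ)))
    (γ : ℕ → ℝ)
    (hγ : ∀ n : ℕ, γ n = (n : ℝ)⁻¹ * ∑ j ∈ Finset.Icc 1 n,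
      pr P ({ω | xs n < X j ω} ∩ allLe X (Set.Icc (j + 1) (j + p n)) (xs n)) /
        pr P {ω | xs n < X j ω}) :
    Tendsto (fun n : ℕ =>
      pr P (allLe X (Set.Icc 1 n) (xs n)) - F (xs n) ^ ((n : ℝ) * γ n))
      atTop (nhds 0) :=
  stmt3_general P X F xs q α p τ hmeas hF hFbarpos hq hbd hFbar hppos hp hnα hqp γ hγ
end
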